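/- arXiv:2207.02510 — 4 statements merged into one kernel-verified Lean document; each statement's English description precedes it below -/
import Mathlib

section
/- If Φ : M_n(ℝ) → M_m(ℝ) is a linear map that is positivity preserving, unital (Φ(I_n) = I_m), and has operator norm 1, then Φ commutes with the transpose: Φ(Aᵗ) = Φ(A)ᵗ for all A ∈ M_n(ℝ). -/
open Matrix
open scoped ComplexOrder Kronecker

/-- Vectorization `Vec(A)` of a rectangular matrix: `Vec(A) = ∑ᵢⱼ aᵢⱼ eᵢ ⊗ eⱼ`. -/
def vecOf {n m : ℕ} {𝕜 : Type*} (A : Matrix (Fin n) (Fin m) 𝕜) : Fin n × Fin m → 𝕜 :=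
  fun x => A x.1 x.2

/-- The Choi matrix `C_Φ = ∑ᵢⱼ Eᵢⱼ ⊗ Φ(Eᵢⱼ)` of a map `Φ`. -/
def choi {𝕜 : Type*} [RCLike 𝕜] {n m : ℕ}
    (Φ : Matrix (Fin n) (Fin n) 𝕜 → Matrix (Fin m) (Fin m) 𝕜) :
    Matrix (Fin n × Fin m) (Fin n × Fin m) 𝕜 :=
  ∑ i : Fin n, ∑ j : Fin n, single i j 1 ⊗ₖ Φ (single i j 1)

/-- A map between matrix algebras is positive if it commutes with the adjoint and
preserves positive semidefiniteness. -/
def IsPosMap {𝕜 : Type*} [RCLike 𝕜] {I J : Type*} [Fintype I] [Fintype J]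
    (Φ : Matrix I I 𝕜 → Matrix J J 𝕜) : Prop :=
  (∀ A, Φ Aᴴ = (Φ A)ᴴ) ∧ ∀ A, A.PosSemidef → (Φ A).PosSemidef

/-- The ampliation `Φ ⊗ id_p` of a map `Φ`. -/
def amplify {𝕜 : Type*} [RCLike 𝕜] {n m : ℕ}
    (Φ : Matrix (Fin n) (Fin n) 𝕜 → Matrix (Fin m) (Fin m) 𝕜) (p : ℕ) :
    Matrix (Fin n × Fin p) (Fin n × Fin p) 𝕜 → Matrix (Fin m × Fin p) (Fin m × Fin p) 𝕜 :=
  fun M => Matrix.of fun x y => Φ (Matrix.of fun i j => M (i, x.2) (j, y.2)) x.1 y.1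

/-- `Φ` is `p`-positive if `Φ ⊗ id_p` is positive. -/
def IsPPositive {𝕜 : Type*} [RCLike 𝕜] {n m : ℕ} (p : ℕ)
    (Φ : Matrix (Fin n) (Fin n) 𝕜 → Matrix (Fin m) (Fin m) 𝕜) : Prop :=
  IsPosMap (amplify Φ p)

/-- The complexification `Φ̃(X + iY) = Φ(X) + iΦ(Y)` of a real linear map. -/
noncomputable def complexify {n m : ℕ}
    (Φ : Matrix (Fin n) (Fin n) ℝ →ₗ[ℝ] Matrix (Fin m) (Fin m) ℝ) :
    Matrix (Fin n) (Fin n) ℂ → Matrix (Fin m) (Fin m) ℂ :=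
  fun M => (Φ (Matrix.of fun i j => (M i j).re)).map Complex.ofReal
    + Complex.I • (Φ (Matrix.of fun i j => (M i j).im)).map Complex.ofReal

/-- The operator (spectral) norm of a real matrix. -/
noncomputable def opNorm {n m : ℕ} (A : Matrix (Fin n) (Fin m) ℝ) : ℝ :=
  ‖(Matrix.toEuclideanLin A).toContinuousLinearMap‖

/-- The cone `SEP_p(𝕜ⁿ ⊗ 𝕜ᵐ)` of sums `∑ⱼ Vec(Aⱼ)Vec(Aⱼ)*` with `rank Aⱼ ≤ p`. -/
def SEPp (𝕜 : Type*) [RCLike 𝕜] (n m p : ℕ) :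
    Set (Matrix (Fin n × Fin m) (Fin n × Fin m) 𝕜) :=
  {M | ∃ (k : ℕ) (A : Fin k → Matrix (Fin n) (Fin m) 𝕜),
    (∀ j, (A j).rank ≤ p) ∧
    M = ∑ j, vecMulVec (vecOf (A j)) (star (vecOf (A j)))}

/-- The cone of separable matrices: sums of Kronecker products of PSD matrices. -/
def SEPProd (𝕜 : Type*) [RCLike 𝕜] (n m : ℕ) :
    Set (Matrix (Fin n × Fin m) (Fin n × Fin m) 𝕜) :=
  {M | ∃ (k : ℕ) (A : Fin k → Matrix (Fin n) (Fin n) 𝕜) (B : Fin k → Matrix (Fin m) (Fin m) 𝕜),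
    (∀ j, (A j).PosSemidef) ∧ (∀ j, (B j).PosSemidef) ∧ M = ∑ j, A j ⊗ₖ B j}

/-- Partial transpose on the first tensor factor: `τ_n ⊗ id_m`. -/
def ptransposeFst {𝕜 : Type*} {n m : ℕ} (M : Matrix (Fin n × Fin m) (Fin n × Fin m) 𝕜) :
    Matrix (Fin n × Fin m) (Fin n × Fin m) 𝕜 :=
  Matrix.of fun x y => M (y.1, x.2) (x.1, y.2)

/-- Partial transpose on the second tensor factor: `id_n ⊗ τ_m`. -/
def ptransposeSnd {𝕜 : Type*} {n m : ℕ} (M : Matrix (Fin n × Fin m) (Fin n × Fin m) 𝕜) :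
    Matrix (Fin n × Fin m) (Fin n × Fin m) 𝕜 :=
  Matrix.of fun x y => M (x.1, y.2) (y.1, x.2)


section AuxStmt1

open Matrix
open scoped RealInnerProductSpace

/-- opNorm is absolutely homogeneous. -/
lemma aux_opNorm_smul {k : ℕ} (a : ℝ) (M : Matrix (Fin k) (Fin k) ℝ) :
    opNorm (a • M) = |a| * opNorm M := by
  unfold opNorm
  rw [_root_.map_smul]
  rw [show ((a • Matrix.toEuclideanLin M).toContinuousLinearMap)
      = a • (Matrix.toEuclideanLin M).toContinuousLinearMap from rfl]
  rw [norm_smul a ((Matrix.toEuclideanLin M).toContinuousLinearMap), Real.norm_eq_abs]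

lemma aux_inner_eq_dot {k : ℕ} (M : Matrix (Fin k) (Fin k) ℝ) (x : Fin k → ℝ) :
    ⟪(WithLp.equiv 2 (Fin k → ℝ)).symm x,
      (Matrix.toEuclideanLin M).toContinuousLinearMap ((WithLp.equiv 2 (Fin k → ℝ)).symm x)⟫
      = x ⬝ᵥ M *ᵥ x := by
  simp [PiLp.inner_apply, RCLike.inner_apply, starRingEnd_apply, toEuclideanLin_apply,
    dotProduct, mulVec]
  exact Finset.sum_congr rfl fun _ _ => mul_comm _ _

lemma aux_dot_self_norm {k : ℕ} (x : Fin k → ℝ) :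
    x ⬝ᵥ x = ‖(WithLp.equiv 2 (Fin k → ℝ)).symm x‖ ^ 2 := by
  rw [← real_inner_self_eq_norm_sq]
  simp [PiLp.inner_apply, RCLike.inner_apply, starRingEnd_apply, dotProduct]
  rw [EuclideanSpace.norm_eq, Real.sq_sqrt (by positivity)]
  simp [Real.norm_eq_abs, ← sq, sq_abs]

lemma aux_dot_self_nonneg {k : ℕ} (x : Fin k → ℝ) : 0 ≤ x ⬝ᵥ x := by
  simp only [dotProduct]
  exact Finset.sum_nonneg fun i _ => mul_self_nonneg _

/-- Quadratic form bounded by operator norm. -/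
lemma aux_quad_le {k : ℕ} (M : Matrix (Fin k) (Fin k) ℝ) (x : Fin k → ℝ) :
    x ⬝ᵥ M *ᵥ x ≤ opNorm M * (x ⬝ᵥ x) := by
  set u : EuclideanSpace ℝ (Fin k) := (WithLp.equiv 2 (Fin k → ℝ)).symm x with hu
  rw [← aux_inner_eq_dot M x, aux_dot_self_norm x, ← hu]
  calc ⟪u, (Matrix.toEuclideanLin M).toContinuousLinearMap u⟫
      ≤ ‖u‖ * ‖(Matrix.toEuclideanLin M).toContinuousLinearMap u‖ := real_inner_le_norm _ _
    _ ≤ ‖u‖ * (opNorm M * ‖u‖) :=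
        mul_le_mul_of_nonneg_left (ContinuousLinearMap.le_opNorm _ u) (norm_nonneg u)
    _ = opNorm M * ‖u‖ ^ 2 := by ring

/-- Antisymmetric matrices have vanishing quadratic form. -/
lemma aux_antisym_quad {k : ℕ} {K : Matrix (Fin k) (Fin k) ℝ} (hK : Kᵀ = -K)
    (x : Fin k → ℝ) : x ⬝ᵥ K *ᵥ x = 0 := by
  have hKe : ∀ i j, K i j = -K j i := by
    intro i j
    have := congrFun (congrFun hK j) i
    simpa [Matrix.transpose_apply] using this
  have h : x ⬝ᵥ K *ᵥ x = -(x ⬝ᵥ K *ᵥ x) := by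
    calc x ⬝ᵥ K *ᵥ x = ∑ i, ∑ j, x i * (K i j * x j) := by
          simp [dotProduct, mulVec, Finset.mul_sum]
      _ = ∑ j, ∑ i, x i * (K i j * x j) := Finset.sum_comm
      _ = ∑ j, ∑ i, -(x j * (K j i * x i)) := by
          refine Finset.sum_congr rfl fun j _ => Finset.sum_congr rfl fun i _ => ?_
          rw [hKe i j]; ring
      _ = -(x ⬝ᵥ K *ᵥ x) := by
          simp [dotProduct, mulVec, Finset.mul_sum]
  linarith

/-- A matrix with vanishing quadratic form is antisymmetric. -/
lemma aux_quad_zero_antisym {k : ℕ} {B : Matrix (Fin k) (Fin k) ℝ}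
    (h : ∀ x : Fin k → ℝ, x ⬝ᵥ B *ᵥ x = 0) : Bᵀ = -B := by
  ext i j
  have hij := h (Pi.single i 1 + Pi.single j 1)
  have hi := h (Pi.single i 1)
  have hj := h (Pi.single j 1)
  have e1 : ∀ a b : Fin k, (Pi.single a 1 : Fin k → ℝ) ⬝ᵥ B *ᵥ (Pi.single b 1) = B a b := by
    intro a b; simp [dotProduct, mulVec, Pi.single_apply]
  simp only [Matrix.mulVec_add, add_dotProduct, dotProduct_add] at hij
  rw [e1 i i, e1 i j, e1 j i, e1 j j] at hij
  rw [e1 i i] at hi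
  rw [e1 j j] at hj
  simp only [Matrix.transpose_apply, Matrix.neg_apply]
  linarith

lemma aux_small (q C : ℝ) (h : ∀ t : ℝ, t * q ≤ t ^ 2 * C) : q = 0 := by
  by_contra hq
  have h1 := h 1
  have h2 := h (-1)
  have hC : 0 < C := by
    rcases lt_or_gt_of_ne hq with hlt | hgt <;> nlinarith
  have h3 := h (q / (2 * C))
  have hq2 : 0 < q ^ 2 := by positivity
  rw [div_mul_eq_mul_div, div_pow, div_mul_eq_mul_div] at h3
  rw [div_le_div_iff₀ (by positivity) (by positivity)] at h3
  nlinarith [mul_pos hq2 (mul_pos hC hC)]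

/-- norm bound for `1 + t • K` with `K` antisymmetric. -/
lemma aux_one_add_antisym {k : ℕ} {K : Matrix (Fin k) (Fin k) ℝ} (hK : Kᵀ = -K) (t : ℝ) :
    opNorm (1 + t • K) ≤ Real.sqrt (1 + t ^ 2 * opNorm K ^ 2) := by
  set c := opNorm K with hc
  unfold opNorm
  apply ContinuousLinearMap.opNorm_le_bound _ (Real.sqrt_nonneg _)
  intro u
  set T := (Matrix.toEuclideanLin K).toContinuousLinearMap with hT
  have happ : (Matrix.toEuclideanLin (1 + t • K)).toContinuousLinearMap u = u + t • T u := by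
    simp only [hT, LinearMap.coe_toContinuousLinearMap', toEuclideanLin_apply, Matrix.add_mulVec,
      Matrix.one_mulVec, Matrix.smul_mulVec]
    rfl
  rw [happ]
  have hinner : ⟪u, T u⟫ = 0 := by
    have h0 := aux_antisym_quad hK ((WithLp.equiv 2 (Fin k → ℝ)) u)
    rw [← aux_inner_eq_dot K ((WithLp.equiv 2 (Fin k → ℝ)) u)] at h0
    simpa [hT] using h0
  have hTu : ‖T u‖ ≤ c * ‖u‖ := ContinuousLinearMap.le_opNorm _ u
  have hsq : ‖u + t • T u‖ ^ 2 ≤ (1 + t ^ 2 * c ^ 2) * ‖u‖ ^ 2 := by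
    rw [norm_add_sq_real, real_inner_smul_right, hinner, norm_smul]
    have h1 : (‖t‖ * ‖T u‖) ^ 2 ≤ t ^ 2 * (c * ‖u‖) ^ 2 := by
      rw [mul_pow, Real.norm_eq_abs, sq_abs]
      gcongr
    nlinarith [norm_nonneg (T u), norm_nonneg u]
  calc ‖u + t • T u‖ = Real.sqrt (‖u + t • T u‖ ^ 2) := (Real.sqrt_sq (norm_nonneg _)).symm
    _ ≤ Real.sqrt ((1 + t ^ 2 * c ^ 2) * ‖u‖ ^ 2) := Real.sqrt_le_sqrt hsq
    _ = Real.sqrt (1 + t ^ 2 * c ^ 2) * ‖u‖ := by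
        rw [Real.sqrt_mul (by positivity), Real.sqrt_sq (norm_nonneg _)]

end AuxStmt1

/-- A positivity preserving, unital, operator-norm-one linear map between real matrix
algebras commutes with the transpose. -/
theorem stmt1 {n m : ℕ} (Φ : Matrix (Fin n) (Fin n) ℝ →ₗ[ℝ] Matrix (Fin m) (Fin m) ℝ)
    (hpos : ∀ A, A.PosSemidef → (Φ A).PosSemidef)
    (hunital : Φ 1 = 1)
    (hnorm : sSup {x : ℝ | ∃ A, opNorm A ≤ 1 ∧ x = opNorm (Φ A)} = 1) :
    ∀ A, Φ Aᵀ = (Φ A)ᵀ := by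
  -- Step 0: the norm hypothesis gives a genuine contraction property
  have hbdd : BddAbove {x : ℝ | ∃ A, opNorm A ≤ 1 ∧ x = opNorm (Φ A)} := by
    by_contra hb
    rw [Real.sSup_of_not_bddAbove hb] at hnorm
    exact one_ne_zero hnorm.symm
  have hbound : ∀ M, opNorm M ≤ 1 → opNorm (Φ M) ≤ 1 := by
    intro M hM
    calc opNorm (Φ M) ≤ sSup {x : ℝ | ∃ A, opNorm A ≤ 1 ∧ x = opNorm (Φ A)} :=
          le_csSup hbdd ⟨M, hM, rfl⟩
      _ = 1 := hnorm
  have hbound' : ∀ (M : Matrix (Fin n) (Fin n) ℝ) (s : ℝ), 0 < s → opNorm M ≤ s →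
      opNorm (Φ M) ≤ s := by
    intro M s hs hMs
    have h1 : opNorm (s⁻¹ • M) ≤ 1 := by
      rw [aux_opNorm_smul, abs_of_pos (by positivity), inv_mul_le_iff₀ hs, mul_one]
      exact hMs
    have h2 := hbound _ h1
    rw [_root_.map_smul, aux_opNorm_smul, abs_of_pos (by positivity),
      inv_mul_le_iff₀ hs, mul_one] at h2
    exact h2
  -- Step 1: Φ maps symmetric matrices to symmetric matrices
  have hsym : ∀ S : Matrix (Fin n) (Fin n) ℝ, Sᵀ = S → (Φ S)ᵀ = Φ S := by
    intro S hS
    set c : ℝ := ∑ i, ∑ j, |S i j| with hcdef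
    have hpsd : (c • (1 : Matrix (Fin n) (Fin n) ℝ) + S).PosSemidef := by
      rw [Matrix.posSemidef_iff_dotProduct_mulVec]
      constructor
      · show (c • (1 : Matrix (Fin n) (Fin n) ℝ) + S)ᴴ = _
        have he : (c • (1 : Matrix (Fin n) (Fin n) ℝ) + S)ᴴ
            = (c • (1 : Matrix (Fin n) (Fin n) ℝ) + S)ᵀ := by
          ext i j; simp [Matrix.conjTranspose_apply]
        rw [he, Matrix.transpose_add, Matrix.transpose_smul, Matrix.transpose_one, hS]
      · intro x
        have hx : (star x : Fin n → ℝ) = x := by ext i; simp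
        rw [hx, Matrix.add_mulVec, dotProduct_add, Matrix.smul_mulVec,
          Matrix.one_mulVec, dotProduct_smul]
        simp only [smul_eq_mul]
        set Q := x ⬝ᵥ x with hQ
        have hQ0 : 0 ≤ Q := aux_dot_self_nonneg x
        have hxQ : ∀ i, x i ^ 2 ≤ Q := by
          intro i
          have h0 : x i * x i ≤ ∑ k, x k * x k :=
            Finset.single_le_sum (fun k _ => mul_self_nonneg (x k)) (Finset.mem_univ i)
          simpa [hQ, dotProduct, sq] using h0
        have hlow : -(c * Q) ≤ x ⬝ᵥ S *ᵥ x := by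
          have expand : x ⬝ᵥ S *ᵥ x = ∑ i, ∑ j, x i * (S i j * x j) := by
            simp [dotProduct, mulVec, Finset.mul_sum]
          have cQ : c * Q = ∑ i, ∑ j, |S i j| * Q := by
            rw [hcdef, Finset.sum_mul]
            exact Finset.sum_congr rfl fun i _ => by rw [Finset.sum_mul]
          rw [expand, cQ, ← Finset.sum_neg_distrib]
          refine Finset.sum_le_sum fun i _ => ?_
          rw [← Finset.sum_neg_distrib]
          refine Finset.sum_le_sum fun j _ => ?_
          have h1 := hxQ i
          have h2 := hxQ j
          nlinarith [le_abs_self (S i j), neg_abs_le (S i j), abs_nonneg (S i j),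
            sq_nonneg (x i + x j), sq_nonneg (x i - x j)]
        linarith
    have hΦpsd := hpos _ hpsd
    have hherm : (Φ (c • 1 + S))ᵀ = Φ (c • 1 + S) := by
      have h := hΦpsd.isHermitian
      have he : (Φ (c • 1 + S))ᴴ = (Φ (c • 1 + S))ᵀ := by
        ext i j; simp [Matrix.conjTranspose_apply]
      rw [← he, h]
    have hdecomp : Φ S = Φ (c • 1 + S) - c • (1 : Matrix (Fin m) (Fin m) ℝ) := by
      rw [map_add, _root_.map_smul, hunital]
      abel
    rw [hdecomp, Matrix.transpose_sub, hherm, Matrix.transpose_smul, Matrix.transpose_one]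
  -- Step 2: Φ maps antisymmetric matrices to antisymmetric matrices
  have hasym : ∀ K : Matrix (Fin n) (Fin n) ℝ, Kᵀ = -K → (Φ K)ᵀ = -Φ K := by
    intro K hK
    set c := opNorm K with hc
    set B := Φ K with hB
    apply aux_quad_zero_antisym
    intro x
    set q := x ⬝ᵥ B *ᵥ x with hq
    set Q := x ⬝ᵥ x with hQ
    have hQ0 : 0 ≤ Q := aux_dot_self_nonneg x
    have key : ∀ t : ℝ, t * q ≤ t ^ 2 * (c ^ 2 * Q / 2) := by
      intro t
      set s := Real.sqrt (1 + t ^ 2 * c ^ 2) with hs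
      have hs1 : 1 ≤ s := by
        rw [hs]
        calc (1:ℝ) = Real.sqrt 1 := Real.sqrt_one.symm
          _ ≤ _ := Real.sqrt_le_sqrt (by nlinarith [sq_nonneg (t*c)])
      have hs0 : 0 < s := lt_of_lt_of_le one_pos hs1
      have hΦs : opNorm (Φ (1 + t • K)) ≤ s :=
        hbound' _ s hs0 (aux_one_add_antisym hK t)
      have hΦeq : Φ (1 + t • K) = 1 + t • B := by
        rw [map_add, _root_.map_smul, hunital, hB]
      have hquad : Q + t * q ≤ s * Q := by
        have h1 := aux_quad_le (Φ (1 + t • K)) x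
        rw [hΦeq, Matrix.add_mulVec, dotProduct_add, Matrix.one_mulVec,
          Matrix.smul_mulVec, dotProduct_smul] at h1
        have h2 : opNorm (1 + t • B) * (x ⬝ᵥ x) ≤ s * Q := by
          rw [← hQ]
          apply mul_le_mul_of_nonneg_right _ hQ0
          rw [← hΦeq]
          exact hΦs
        calc Q + t * q = x ⬝ᵥ x + t • (x ⬝ᵥ B *ᵥ x) := by simp [hQ, hq, smul_eq_mul]
          _ ≤ opNorm (1 + t • B) * (x ⬝ᵥ x) := h1
          _ ≤ s * Q := h2
      have hssmall : s ≤ 1 + t ^ 2 * c ^ 2 / 2 := by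
        rw [hs]
        calc Real.sqrt (1 + t ^ 2 * c ^ 2)
            ≤ Real.sqrt ((1 + t ^ 2 * c ^ 2 / 2) ^ 2) :=
              Real.sqrt_le_sqrt (by nlinarith [sq_nonneg (t ^ 2 * c ^ 2)])
          _ = 1 + t ^ 2 * c ^ 2 / 2 := Real.sqrt_sq (by nlinarith [sq_nonneg (t*c)])
      have hfin : s * Q ≤ (1 + t ^ 2 * c ^ 2 / 2) * Q := mul_le_mul_of_nonneg_right hssmall hQ0
      nlinarith
    exact aux_small q _ key
  -- Step 3: assemble
  intro A
  have h1 := hsym ((1/2 : ℝ) • (A + Aᵀ)) (by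
    rw [Matrix.transpose_smul, Matrix.transpose_add, Matrix.transpose_transpose, add_comm Aᵀ A])
  have h2 := hasym ((1/2 : ℝ) • (A - Aᵀ)) (by
    rw [Matrix.transpose_smul, Matrix.transpose_sub, Matrix.transpose_transpose,
      ← smul_neg, neg_sub])
  have hA1 : Φ Aᵀ = Φ ((1/2 : ℝ) • (A + Aᵀ)) - Φ ((1/2 : ℝ) • (A - Aᵀ)) := by
    rw [← map_sub]
    congr 1
    module
  have hA2 : Φ A = Φ ((1/2 : ℝ) • (A + Aᵀ)) + Φ ((1/2 : ℝ) • (A - Aᵀ)) := by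
    rw [← map_add]
    congr 1
    module
  rw [hA1, hA2, Matrix.transpose_add, h1, h2]
  abel
end

section
/- The map Φ : M₂(ℝ) → M₂(ℝ) defined by Φ([[a,b],[c,d]]) = [[d,(b−c)/2],[(c−b)/2,d]] is positive (positivity preserving and commuting with the transpose), unital, and has operator norm 1, but its complexification Φ̃ : M₂(ℂ) → M₂(ℂ) is not positive. -/
open Matrix
open scoped ComplexOrder Kronecker

section Aux

lemma aux_exists_unit_sqrt (w : ℂ) (hw : ‖w‖ = 1) : ∃ p : ℂ, ‖p‖ = 1 ∧ p ^ 2 = w := by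
  have hw0 : w ≠ 0 := by intro h; rw [h] at hw; simp at hw
  refine ⟨Complex.exp (Complex.log w / 2), ?_, ?_⟩
  · rw [Complex.norm_exp]
    have : (Complex.log w / 2).re = Real.log ‖w‖ / 2 := by
      simp [Complex.div_re, Complex.log_re]
    rw [this]
    rw [hw]
    simp
  · rw [← Complex.exp_nat_mul]
    rw [show (2 : ℕ) * (Complex.log w / 2) = Complex.log w by ring]
    exact Complex.exp_log hw0

lemma aux_opNorm_le_bound (A : Matrix (Fin 2) (Fin 2) ℝ) (C : ℝ) (hC : 0 ≤ C)
    (h : ∀ x : Fin 2 → ℝ, Real.sqrt ((A.mulVec x 0)^2 + (A.mulVec x 1)^2) ≤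
      C * Real.sqrt ((x 0)^2 + (x 1)^2)) :
    opNorm A ≤ C := by
  apply ContinuousLinearMap.opNorm_le_bound _ hC
  intro x
  rw [LinearMap.coe_toContinuousLinearMap', Matrix.toEuclideanLin_apply,
    EuclideanSpace.norm_eq, EuclideanSpace.norm_eq]
  simp only [Fin.sum_univ_two, Real.norm_eq_abs, sq_abs, PiLp.toLp_apply]
  exact h _

lemma aux_le_opNorm (A : Matrix (Fin 2) (Fin 2) ℝ) (u v : EuclideanSpace ℝ (Fin 2))
    (hu : (u 0)^2 + (u 1)^2 = 1) (hv : (v 0)^2 + (v 1)^2 = 1) :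
    u 0 * (A.mulVec v 0) + u 1 * (A.mulVec v 1) ≤ opNorm A := by
  set f := (Matrix.toEuclideanLin A).toContinuousLinearMap with hf
  have hfv : ∀ (i : Fin 2), f v i = A.mulVec v i := by
    intro i
    simp only [hf, LinearMap.coe_toContinuousLinearMap', Matrix.toEuclideanLin_apply,
      PiLp.toLp_apply]
  have hun : ‖u‖ = 1 := by
    rw [EuclideanSpace.norm_eq]
    simp only [Fin.sum_univ_two, Real.norm_eq_abs, sq_abs]
    rw [hu]; exact Real.sqrt_one
  have hvn : ‖v‖ = 1 := by
    rw [EuclideanSpace.norm_eq]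
    simp only [Fin.sum_univ_two, Real.norm_eq_abs, sq_abs]
    rw [hv]; exact Real.sqrt_one
  calc u 0 * (A.mulVec v 0) + u 1 * (A.mulVec v 1)
      = (inner ℝ u (f v) : ℝ) := by
        rw [PiLp.inner_apply]
        simp only [Fin.sum_univ_two, RCLike.inner_apply, starRingEnd_apply, star_trivial]
        rw [hfv 0, hfv 1]
        ring
    _ ≤ ‖u‖ * ‖f v‖ := real_inner_le_norm _ _
    _ ≤ ‖u‖ * (‖f‖ * ‖v‖) := mul_le_mul_of_nonneg_left (f.le_opNorm v) (norm_nonneg u)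
    _ = opNorm A := by rw [hun, hvn, opNorm]; ring

lemma aux_crux (A : Matrix (Fin 2) (Fin 2) ℝ) :
    Real.sqrt ((A 1 1)^2 + ((A 0 1 - A 1 0)/2)^2) ≤ opNorm A := by
  obtain ⟨a, ha⟩ : ∃ x, A 0 0 = x := ⟨_, rfl⟩
  obtain ⟨b, hb⟩ : ∃ x, A 0 1 = x := ⟨_, rfl⟩
  obtain ⟨c, hc⟩ : ∃ x, A 1 0 = x := ⟨_, rfl⟩
  obtain ⟨d, hd⟩ : ∃ x, A 1 1 = x := ⟨_, rfl⟩
  rw [hb, hc, hd]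
  obtain ⟨r, hrdef⟩ : ∃ x, Real.sqrt (d^2 + ((b - c)/2)^2) = x := ⟨_, rfl⟩
  rw [hrdef]
  have hrnn : (0:ℝ) ≤ d^2 + ((b - c)/2)^2 := by positivity
  have hr2 : r^2 = d^2 + ((b - c)/2)^2 := by rw [← hrdef]; exact Real.sq_sqrt hrnn
  have hr0 : 0 ≤ r := by rw [← hrdef]; exact Real.sqrt_nonneg _
  clear hrdef
  rcases eq_or_lt_of_le hr0 with hrz | hr
  · rw [← hrz]; exact norm_nonneg _
  obtain ⟨z₁, hz1⟩ : ∃ x, x = d / r := ⟨_, rfl⟩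
  obtain ⟨z₂, hz2⟩ : ∃ x, x = (c - b) / (2*r) := ⟨_, rfl⟩
  have hz : z₁^2 + z₂^2 = 1 := by
    rw [hz1, hz2]
    field_simp
    nlinarith [hr2]
  obtain ⟨t, ht2, htbc⟩ : ∃ t : ℝ, t^2 = 1 - z₁^2 ∧ 0 ≤ t*(b+c) := by
    have h1 : 0 ≤ 1 - z₁^2 := by nlinarith [sq_nonneg z₂]
    rcases le_or_gt 0 (b + c) with h | h
    · exact ⟨Real.sqrt (1 - z₁^2), Real.sq_sqrt h1, by positivity⟩
    · exact ⟨-Real.sqrt (1 - z₁^2), by rw [neg_pow]; simp [Real.sq_sqrt h1],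
        by nlinarith [Real.sqrt_nonneg (1 - z₁^2)]⟩
  obtain ⟨zc, hzc⟩ : ∃ x : ℂ, x = ⟨z₁, z₂⟩ := ⟨_, rfl⟩
  obtain ⟨sc, hsc⟩ : ∃ x : ℂ, x = ⟨-z₁, t⟩ := ⟨_, rfl⟩
  have hzcn : ‖zc‖ = 1 := by
    rw [hzc, Complex.norm_def, Complex.normSq_mk]
    rw [show z₁ * z₁ + z₂ * z₂ = 1 by nlinarith [hz]]
    exact Real.sqrt_one
  have hscn : ‖sc‖ = 1 := by
    rw [hsc, Complex.norm_def, Complex.normSq_mk]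
    rw [show -z₁ * -z₁ + t * t = 1 by nlinarith [ht2]]
    exact Real.sqrt_one
  obtain ⟨p, hpn, hp2⟩ := aux_exists_unit_sqrt (zc * sc) (by rw [norm_mul, hzcn, hscn]; ring)
  obtain ⟨q, hq⟩ : ∃ x : ℂ, x = p * (starRingEnd ℂ) zc := ⟨_, rfl⟩
  have hnp : p * (starRingEnd ℂ) p = 1 := by
    rw [Complex.mul_conj, Complex.normSq_eq_norm_sq, hpn]
    norm_num
  have hnz : zc * (starRingEnd ℂ) zc = 1 := by
    rw [Complex.mul_conj, Complex.normSq_eq_norm_sq, hzcn]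
    norm_num
  have hpcq : p * (starRingEnd ℂ) q = zc := by
    rw [hq, _root_.map_mul, Complex.conj_conj]
    calc p * ((starRingEnd ℂ) p * zc) = (p * (starRingEnd ℂ) p) * zc := by ring
      _ = zc := by rw [hnp, one_mul]
  have hppq : p * q = sc := by
    rw [hq, show p * (p * (starRingEnd ℂ) zc) = p^2 * (starRingEnd ℂ) zc by ring, hp2]
    calc zc * sc * (starRingEnd ℂ) zc = (zc * (starRingEnd ℂ) zc) * sc := by ring
      _ = sc := by rw [hnz, one_mul]
  -- extract real relations
  have hA1 : p.re * q.re + p.im * q.im = z₁ := by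
    have := congrArg Complex.re hpcq
    simpa [Complex.mul_re, hzc, mul_comm] using this
  have hA2 : p.im * q.re - p.re * q.im = z₂ := by
    have := congrArg Complex.im hpcq
    simp [Complex.mul_im, hzc] at this
    linarith [this]
  have hB1 : p.re * q.re - p.im * q.im = -z₁ := by
    have := congrArg Complex.re hppq
    simpa [Complex.mul_re, hsc] using this
  have hB2 : p.re * q.im + p.im * q.re = t := by
    have := congrArg Complex.im hppq
    simpa [Complex.mul_im, hsc] using this
  have hup : p.re^2 + p.im^2 = 1 := by
    have : Complex.normSq p = 1 := by
      rw [Complex.normSq_eq_norm_sq, hpn]; norm_num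
    simpa [Complex.normSq_apply, sq] using this
  have huq : q.re^2 + q.im^2 = 1 := by
    have hqn : ‖q‖ = 1 := by rw [hq, norm_mul, hpn, RCLike.norm_conj, hzcn]; norm_num
    have : Complex.normSq q = 1 := by
      rw [Complex.normSq_eq_norm_sq, hqn]; norm_num
    simpa [Complex.normSq_apply, sq] using this
  have hle := aux_le_opNorm A (WithLp.toLp 2 ![p.re, p.im]) (WithLp.toLp 2 ![q.re, q.im])
    (by simpa using hup) (by simpa using huq)
  have hmv0 : A.mulVec ![q.re, q.im] 0 = a * q.re + b * q.im := by
    simp [Matrix.mulVec, dotProduct, Fin.sum_univ_two, ha, hb]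
  have hmv1 : A.mulVec ![q.re, q.im] 1 = c * q.re + d * q.im := by
    simp [Matrix.mulVec, dotProduct, Fin.sum_univ_two, hc, hd]
  have hval : (WithLp.toLp 2 ![p.re, p.im] : EuclideanSpace ℝ (Fin 2)) 0 * (A.mulVec ![q.re, q.im] 0)
      + (WithLp.toLp 2 ![p.re, p.im] : EuclideanSpace ℝ (Fin 2)) 1 * (A.mulVec ![q.re, q.im] 1)
      = p.re * (a * q.re + b * q.im) + p.im * (c * q.re + d * q.im) := by
    rw [hmv0, hmv1]; rfl
  rw [hval] at hle
  refine le_trans ?_ hle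
  -- now pure algebra: r ≤ p.re*(a*q.re + b*q.im) + p.im*(c*q.re + d*q.im)
  have hP1 : p.re * q.re = 0 := by linear_combination (hA1 + hB1) / 2
  have hP2 : p.im * q.im = z₁ := by linear_combination (hA1 - hB1) / 2
  have hP3 : p.im * q.re = (z₂ + t)/2 := by linear_combination (hA2 + hB2) / 2
  have hP4 : p.re * q.im = (t - z₂)/2 := by linear_combination (hB2 - hA2) / 2
  have hexp : p.re * (a * q.re + b * q.im) + p.im * (c * q.re + d * q.im)
      = t*(b+c)/2 + ((c-b)/2 * z₂ + d * z₁) := by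
    have e1 : p.re * (a * q.re + b * q.im) = a * (p.re * q.re) + b * (p.re * q.im) := by ring
    have e2 : p.im * (c * q.re + d * q.im) = c * (p.im * q.re) + d * (p.im * q.im) := by ring
    rw [e1, e2, hP1, hP2, hP3, hP4]; ring
  rw [hexp]
  have hrne : r ≠ 0 := ne_of_gt hr
  have hkey : (c-b)/2 * z₂ + d * z₁ = r := by
    rw [hz1, hz2]
    have h1 : (c-b)/2 * ((c-b)/(2*r)) + d * (d/r) = (d^2 + ((b-c)/2)^2)/r := by
      field_simp
      ring
    rw [h1, ← hr2, sq, mul_div_assoc, div_self hrne, mul_one]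
  rw [hkey]
  linarith [htbc]


lemma aux_opNorm_rot (d e : ℝ) : opNorm !![d, e; -e, d] ≤ Real.sqrt (d^2 + e^2) := by
  apply aux_opNorm_le_bound _ _ (Real.sqrt_nonneg _)
  intro x
  have h0 : (!![d, e; -e, d]).mulVec x 0 = d * x 0 + e * x 1 := by
    simp [Matrix.mulVec, dotProduct, Fin.sum_univ_two]
  have h1 : (!![d, e; -e, d]).mulVec x 1 = -e * x 0 + d * x 1 := by
    simp [Matrix.mulVec, dotProduct, Fin.sum_univ_two]
  rw [h0, h1, ← Real.sqrt_mul (by positivity)]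
  apply Real.sqrt_le_sqrt
  nlinarith [sq_nonneg (x 0), sq_nonneg (x 1)]

lemma aux_opNorm_one : opNorm (1 : Matrix (Fin 2) (Fin 2) ℝ) = 1 := by
  apply le_antisymm
  · apply aux_opNorm_le_bound _ _ zero_le_one
    intro x
    simp [Matrix.one_mulVec]
  · have h := aux_crux (1 : Matrix (Fin 2) (Fin 2) ℝ)
    simpa [Matrix.one_apply] using h

end Aux

/-- The map `Φ([[a,b],[c,d]]) = [[d,(b-c)/2],[(c-b)/2,d]]` on `M₂(ℝ)` is positive
(positivity preserving and commuting with the transpose), unital, of operator norm one,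
but its complexification is not positive. -/
theorem stmt11 (Φ : Matrix (Fin 2) (Fin 2) ℝ →ₗ[ℝ] Matrix (Fin 2) (Fin 2) ℝ)
    (hΦ : ∀ A, Φ A = !![A 1 1, (A 0 1 - A 1 0) / 2; (A 1 0 - A 0 1) / 2, A 1 1]) :
    (∀ A, Φ Aᵀ = (Φ A)ᵀ) ∧ (∀ A, A.PosSemidef → (Φ A).PosSemidef) ∧ Φ 1 = 1 ∧
    sSup {x : ℝ | ∃ A, opNorm A ≤ 1 ∧ x = opNorm (Φ A)} = 1 ∧
    ¬ IsPosMap (complexify Φ) := by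
  have h3 : Φ 1 = 1 := by
    rw [hΦ]
    ext i j
    fin_cases i <;> fin_cases j <;> simp [Matrix.one_apply]
  refine ⟨?_, ?_, h3, ?_, ?_⟩
  · -- transpose
    intro A
    rw [hΦ, hΦ]
    ext i j
    fin_cases i <;> fin_cases j <;> simp [Matrix.transpose_apply] <;> ring
  · -- positivity
    intro A hA
    have hbc : A 0 1 = A 1 0 := by
      conv_lhs => rw [← hA.1]
      simp [Matrix.conjTranspose_apply]
    have hd : 0 ≤ A 1 1 := by
      have h := hA.dotProduct_mulVec_nonneg ![0, 1]
      simpa [dotProduct, Matrix.mulVec, Fin.sum_univ_two] using h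
    rw [hΦ, hbc, sub_self, zero_div]
    rw [Matrix.posSemidef_iff_dotProduct_mulVec]
    constructor
    · ext i j
      fin_cases i <;> fin_cases j <;> simp [Matrix.conjTranspose_apply]
    · intro x
      have hx : star x ⬝ᵥ (!![A 1 1, 0; 0, A 1 1]).mulVec x
          = A 1 1 * (x 0 * x 0) + A 1 1 * (x 1 * x 1) := by
        simp [dotProduct, Matrix.mulVec, Fin.sum_univ_two]
        ring
      rw [hx]
      have := mul_nonneg hd (mul_self_nonneg (x 0))
      have := mul_nonneg hd (mul_self_nonneg (x 1))
      linarith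
  · -- sSup = 1
    have hub : ∀ x ∈ {x : ℝ | ∃ A, opNorm A ≤ 1 ∧ x = opNorm (Φ A)}, x ≤ 1 := by
      rintro x ⟨A, hA1, rfl⟩
      rw [hΦ]
      have heq : (!![A 1 1, (A 0 1 - A 1 0) / 2; (A 1 0 - A 0 1) / 2, A 1 1]
          : Matrix (Fin 2) (Fin 2) ℝ)
          = !![A 1 1, (A 0 1 - A 1 0) / 2; -((A 0 1 - A 1 0) / 2), A 1 1] := by
        ext i j
        fin_cases i <;> fin_cases j <;> simp <;> ring
      rw [heq]
      calc opNorm !![A 1 1, (A 0 1 - A 1 0) / 2; -((A 0 1 - A 1 0) / 2), A 1 1]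
          ≤ Real.sqrt ((A 1 1)^2 + ((A 0 1 - A 1 0)/2)^2) := aux_opNorm_rot _ _
        _ ≤ opNorm A := aux_crux A
        _ ≤ 1 := hA1
    have hmem : (1:ℝ) ∈ {x : ℝ | ∃ A, opNorm A ≤ 1 ∧ x = opNorm (Φ A)} :=
      ⟨1, le_of_eq aux_opNorm_one, by rw [h3, aux_opNorm_one]⟩
    exact le_antisymm (csSup_le ⟨1, hmem⟩ hub) (le_csSup ⟨1, hub⟩ hmem)
  · -- complexification not positive
    rintro ⟨h1, h2⟩
    set M : Matrix (Fin 2) (Fin 2) ℂ := !![4, 2*Complex.I; -2*Complex.I, 1] with hM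
    have hMeq : M = (!![2, Complex.I] : Matrix (Fin 1) (Fin 2) ℂ)ᴴ * !![2, Complex.I] := by
      ext i j
      fin_cases i <;> fin_cases j <;>
        simp [hM, Matrix.mul_apply, Fin.sum_univ_one, Matrix.conjTranspose_apply] <;>
        ring_nf <;> simp [Complex.I_sq] <;> ring
    have hMpsd : M.PosSemidef := hMeq ▸ Matrix.posSemidef_conjTranspose_mul_self _
    have hc := h2 M hMpsd
    have hcomp : complexify Φ M = !![1, 2*Complex.I; -2*Complex.I, 1] := by
      unfold complexify
      rw [hΦ, hΦ]
      ext i j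
      fin_cases i <;> fin_cases j <;>
        simp [hM, Matrix.add_apply, Matrix.smul_apply, Matrix.map_apply, Complex.ext_iff] <;>
        norm_num
    rw [hcomp] at hc
    have hq := hc.dotProduct_mulVec_nonneg ![1, Complex.I]
    have hval : (star ![1, Complex.I] ⬝ᵥ
        (!![1, 2*Complex.I; -2*Complex.I, 1]).mulVec ![1, Complex.I]) = -2 := by
      simp [dotProduct, Matrix.mulVec, Fin.sum_univ_two, Complex.ext_iff]
      norm_num
    rw [hval] at hq
    rw [Complex.le_def] at hq
    norm_num at hq
end

section
/- The matrix P = I₂⊗I₂ + A⊗A, where A = [[0,−i],[i,0]], is a real matrix in PSD(ℝ²⊗ℝ²) that is ℂ-separable (2P = (I+A)⊗(I+A) + (I−A)⊗(I−A) with I±A complex PSD) but not ℝ-separable, since (id⊗τ)(P) ≠ P. -/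
open Matrix
open scoped ComplexOrder Kronecker

noncomputable def A16 : Matrix (Fin 2) (Fin 2) ℂ := !![0, -Complex.I; Complex.I, 0]

noncomputable def P16 : Matrix (Fin 2 × Fin 2) (Fin 2 × Fin 2) ℂ := 1 ⊗ₖ 1 + A16 ⊗ₖ A16

/-- The real part of `P16`, as a real matrix. -/
noncomputable def P16R : Matrix (Fin 2 × Fin 2) (Fin 2 × Fin 2) ℝ :=
  Matrix.of fun x y => (P16 x y).re


lemma aux16_plus : (1 + A16) = !![(1:ℂ); Complex.I] * (!![(1:ℂ); Complex.I])ᴴ := by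
  ext i j
  fin_cases i <;> fin_cases j <;>
    simp [A16, Matrix.mul_apply, Matrix.one_apply, Fin.sum_univ_succ]

lemma aux16_minus : (1 - A16) = !![(1:ℂ); -Complex.I] * (!![(1:ℂ); -Complex.I])ᴴ := by
  ext i j
  fin_cases i <;> fin_cases j <;>
    simp [A16, Matrix.mul_apply, Matrix.one_apply, Fin.sum_univ_succ]

lemma aux16_half_plus : (2:ℂ)⁻¹ • (1 + A16) =
    (!![((1+Complex.I)/2 : ℂ), (1-Complex.I)/2])ᴴ * !![((1+Complex.I)/2 : ℂ), (1-Complex.I)/2] := by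
  ext i j
  fin_cases i <;> fin_cases j <;>
    simp [A16, Matrix.mul_apply, Matrix.one_apply, Fin.sum_univ_succ, Complex.ext_iff] <;>
    norm_num [Complex.ext_iff]

lemma aux16_half_minus : (2:ℂ)⁻¹ • (1 - A16) =
    (!![((1+Complex.I)/2 : ℂ), (-1+Complex.I)/2])ᴴ * !![((1+Complex.I)/2 : ℂ), (-1+Complex.I)/2] := by
  ext i j
  fin_cases i <;> fin_cases j <;>
    simp [A16, Matrix.mul_apply, Matrix.one_apply, Fin.sum_univ_succ, Complex.ext_iff] <;>
    norm_num [Complex.ext_iff]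

noncomputable def BR16 : Matrix (Fin 2 × Fin 2) (Fin 2) ℝ :=
  Matrix.of fun x j =>
    if j = 0 then (if x = (0,0) then 1 else if x = (1,1) then -1 else 0)
    else (if x = (0,1) ∨ x = (1,0) then 1 else 0)

lemma aux16_PR : P16R = BR16 * BR16ᴴ := by
  ext ⟨i,k⟩ ⟨j,l⟩
  fin_cases i <;> fin_cases k <;> fin_cases j <;> fin_cases l <;>
    simp [P16R, P16, A16, BR16, Matrix.mul_apply, Matrix.one_apply, Prod.ext_iff,
      Fin.sum_univ_succ]

lemma aux16_two_smul :
    (2 : ℂ) • P16 = (1 + A16) ⊗ₖ (1 + A16) + (1 - A16) ⊗ₖ (1 - A16) := by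
  ext ⟨i,k⟩ ⟨j,l⟩
  fin_cases i <;> fin_cases k <;> fin_cases j <;> fin_cases l <;>
    simp [P16, A16, Matrix.one_apply, Prod.ext_iff] <;> ring

lemma aux16_ptr_kron {n m : ℕ} (A : Matrix (Fin n) (Fin n) ℝ) (B : Matrix (Fin m) (Fin m) ℝ) :
    ptransposeSnd (A ⊗ₖ B) = A ⊗ₖ Bᵀ := by
  ext x y; simp [ptransposeSnd]

lemma aux16_ptr_sum {n m k : ℕ} (f : Fin k → Matrix (Fin n × Fin m) (Fin n × Fin m) ℝ) :
    ptransposeSnd (∑ j, f j) = ∑ j, ptransposeSnd (f j) := by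
  ext x y; simp [ptransposeSnd, Matrix.sum_apply]

/-- `P = I⊗I + A⊗A` with `A = [[0,-i],[i,0]]` is a real PSD matrix which is ℂ-separable
(via `2P = (I+A)⊗(I+A) + (I-A)⊗(I-A)` with `I±A` PSD) but not ℝ-separable, since it is not
invariant under partial transposition. -/
theorem stmt16 :
    P16R.map Complex.ofReal = P16 ∧ P16R.PosSemidef ∧
    (1 + A16).PosSemidef ∧ (1 - A16).PosSemidef ∧
    (2 : ℂ) • P16 = (1 + A16) ⊗ₖ (1 + A16) + (1 - A16) ⊗ₖ (1 - A16) ∧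
    P16 ∈ SEPProd ℂ 2 2 ∧
    ptransposeSnd P16R ≠ P16R ∧
    P16R ∉ SEPProd ℝ 2 2 := by
  have hptr : ptransposeSnd P16R ≠ P16R := by
    intro h
    have := congrFun (congrFun h ((0:Fin 2),(0:Fin 2))) ((1:Fin 2),(1:Fin 2))
    simp [ptransposeSnd, P16R, P16, A16, Matrix.one_apply, Prod.ext_iff] at this
    norm_num at this
  refine ⟨?_, ?_, ?_, ?_, aux16_two_smul, ?_, hptr, ?_⟩
  · ext ⟨i,k⟩ ⟨j,l⟩
    fin_cases i <;> fin_cases k <;> fin_cases j <;> fin_cases l <;>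
      simp [P16R, P16, A16, Matrix.one_apply, Complex.ext_iff, Prod.ext_iff]
  · rw [aux16_PR]; exact posSemidef_self_mul_conjTranspose _
  · rw [aux16_plus]; exact posSemidef_self_mul_conjTranspose _
  · rw [aux16_minus]; exact posSemidef_self_mul_conjTranspose _
  · -- ℂ-separable
    refine ⟨2, ![(2:ℂ)⁻¹ • (1 + A16), (2:ℂ)⁻¹ • (1 - A16)], ![1 + A16, 1 - A16], ?_, ?_, ?_⟩
    · intro j
      have h1 : ((2:ℂ)⁻¹ • (1 + A16)).PosSemidef := by
        rw [aux16_half_plus]; exact posSemidef_conjTranspose_mul_self _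
      have h2 : ((2:ℂ)⁻¹ • (1 - A16)).PosSemidef := by
        rw [aux16_half_minus]; exact posSemidef_conjTranspose_mul_self _
      fin_cases j
      · simpa using h1
      · simpa using h2
    · intro j
      have h1 : (1 + A16).PosSemidef := by
        rw [aux16_plus]; exact posSemidef_self_mul_conjTranspose _
      have h2 : (1 - A16).PosSemidef := by
        rw [aux16_minus]; exact posSemidef_self_mul_conjTranspose _
      fin_cases j
      · simpa using h1
      · simpa using h2
    · have h2 : P16 = (2:ℂ)⁻¹ • ((1 + A16) ⊗ₖ (1 + A16) + (1 - A16) ⊗ₖ (1 - A16)) := by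
        rw [← aux16_two_smul, smul_smul]; norm_num
      rw [h2, Fin.sum_univ_two]
      simp only [Matrix.cons_val_zero, Matrix.cons_val_one, Matrix.head_cons]
      rw [Matrix.smul_kronecker, Matrix.smul_kronecker, ← smul_add]
  · -- not ℝ-separable
    rintro ⟨k, A, B, hA, hB, hM⟩
    apply hptr
    rw [hM, aux16_ptr_sum]
    congr 1
    funext j
    rw [aux16_ptr_kron, ← Matrix.conjTranspose_eq_transpose_of_trivial, (hB j).isHermitian.eq]
end

section
/- CSEP(ℝⁿ⊗ℝᵐ) ∩ IPT(ℝⁿ⊗ℝᵐ) = SEP(ℝⁿ⊗ℝᵐ): a real positive semidefinite matrix on ℝⁿ⊗ℝᵐ is ℝ-separable if and only if it is ℂ-separable and invariant under partial transposition. -/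
open Matrix
open scoped ComplexOrder Kronecker

open scoped MatrixOrder in
private lemma posSemidef_iff_eq_transpose_mul_self {n : Type*} [Fintype n] [DecidableEq n]
    {𝕜 : Type*} [RCLike 𝕜] {A : Matrix n n 𝕜} : A.PosSemidef ↔ ∃ B : Matrix n n 𝕜, A = Bᴴ * B := by
  constructor
  · intro hA
    obtain ⟨B, hB⟩ := CStarAlgebra.nonneg_iff_eq_star_mul_self.mp hA.nonneg
    exact ⟨B, hB⟩
  · rintro ⟨B, rfl⟩
    exact posSemidef_conjTranspose_mul_self B

private lemma psd_kron {n m : ℕ} {𝕜 : Type*} [RCLike 𝕜] (A : Matrix (Fin n) (Fin n) 𝕜)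
    (B : Matrix (Fin m) (Fin m) 𝕜) (hA : A.PosSemidef) (hB : B.PosSemidef) :
    (A ⊗ₖ B).PosSemidef := by
  obtain ⟨C, rfl⟩ := posSemidef_iff_eq_transpose_mul_self.mp hA
  obtain ⟨D, rfl⟩ := posSemidef_iff_eq_transpose_mul_self.mp hB
  rw [mul_kronecker_mul]
  have h : Cᴴ ⊗ₖ Dᴴ = (C ⊗ₖ D)ᴴ := by
    ext x y; simp [kroneckerMap_apply, conjTranspose_apply, mul_comm]
  rw [h]
  exact posSemidef_conjTranspose_mul_self _

private lemma psd_map_ofReal {n : ℕ} (A : Matrix (Fin n) (Fin n) ℝ) (hA : A.PosSemidef) :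
    (A.map Complex.ofReal).PosSemidef := by
  obtain ⟨B, rfl⟩ := posSemidef_iff_eq_transpose_mul_self.mp hA
  have h : (Bᴴ * B).map Complex.ofReal = (B.map Complex.ofReal)ᴴ * B.map Complex.ofReal := by
    ext x y
    simp [Matrix.mul_apply, Matrix.map_apply, conjTranspose_apply, Complex.ofReal_sum]
  rw [h]; exact posSemidef_conjTranspose_mul_self _

private lemma psd_re {n : ℕ} (P : Matrix (Fin n) (Fin n) ℂ) (hP : P.PosSemidef) :
    (P.map Complex.re).PosSemidef := by
  refine .of_dotProduct_mulVec_nonneg ?_ ?_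
  · ext x y
    have h := congrFun (congrFun hP.1 x) y
    simp only [conjTranspose_apply] at h
    simp [conjTranspose_apply, Matrix.map_apply, ← h]
  · intro x
    have h := hP.dotProduct_mulVec_nonneg (fun i => (x i : ℂ))
    rw [Complex.le_def] at h
    have hre := h.1
    simp only [Complex.zero_re] at hre
    refine le_of_le_of_eq hre (Eq.symm ?_)
    simp [dotProduct, mulVec, Complex.re_sum, Complex.mul_re, Finset.mul_sum,
      Matrix.map_apply]

/-- `CSEP(ℝⁿ⊗ℝᵐ) ∩ IPT(ℝⁿ⊗ℝᵐ) = SEP(ℝⁿ⊗ℝᵐ)`: a real PSD matrix is ℝ-separable iff it is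
ℂ-separable and invariant under partial transposition. -/
theorem stmt18 {n m : ℕ} :
    {M : Matrix (Fin n × Fin m) (Fin n × Fin m) ℝ |
        (M.PosSemidef ∧ M.map Complex.ofReal ∈ SEPProd ℂ n m) ∧ ptransposeFst M = M} =
      SEPProd ℝ n m := by
  ext M
  simp only [Set.mem_setOf_eq]
  constructor
  · rintro ⟨⟨hpsd, ⟨k, P, Q, hP, hQ, hX⟩⟩, hpt⟩
    refine ⟨k, fun j => (P j).map Complex.re, fun j => (Q j).map Complex.re,
      fun j => psd_re _ (hP j), fun j => psd_re _ (hQ j), ?_⟩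
    ext ⟨x1, x2⟩ ⟨y1, y2⟩
    have hE : ∀ (a c : Fin n) (b d : Fin m),
        (M (a, b) (c, d) : ℂ) = ∑ j, P j a c * Q j b d := by
      intro a c b d
      have h := congrFun (congrFun hX (a, b)) (c, d)
      simpa [Matrix.map_apply, Matrix.sum_apply, kroneckerMap_apply] using h
    have hre : ∀ (a c : Fin n) (b d : Fin m),
        M (a, b) (c, d) = ∑ j, ((P j a c).re * (Q j b d).re - (P j a c).im * (Q j b d).im) := by
      intro a c b d
      have h := congrArg Complex.re (hE a c b d)
      simpa [Complex.re_sum, Complex.mul_re, sub_eq_add_neg] using h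
    have h1 := hre x1 y1 x2 y2
    have hsym : M (y1, x2) (x1, y2) = M (x1, x2) (y1, y2) :=
      congrFun (congrFun hpt (x1, x2)) (y1, y2)
    have hherm : ∀ j, P j y1 x1 = star (P j x1 y1) := by
      intro j
      have h := congrFun (congrFun (hP j).1 y1) x1
      simpa [conjTranspose_apply] using h.symm
    have h2 : M (x1, x2) (y1, y2)
        = ∑ j, ((P j x1 y1).re * (Q j x2 y2).re + (P j x1 y1).im * (Q j x2 y2).im) := by
      rw [← hsym, hre y1 x1 x2 y2]
      refine Finset.sum_congr rfl fun j _ => ?_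
      rw [hherm j]
      simp [Complex.conj_re, Complex.conj_im]
    have key : M (x1, x2) (y1, y2) + M (x1, x2) (y1, y2)
        = ∑ j, 2 * ((P j x1 y1).re * (Q j x2 y2).re) := by
      nth_rewrite 1 [h1]
      nth_rewrite 1 [h2]
      rw [← Finset.sum_add_distrib]
      exact Finset.sum_congr rfl fun j _ => by ring
    have goal : M (x1, x2) (y1, y2) = ∑ j, (P j x1 y1).re * (Q j x2 y2).re := by
      have h2s : (2 : ℝ) * ∑ j, (P j x1 y1).re * (Q j x2 y2).re
          = ∑ j, 2 * ((P j x1 y1).re * (Q j x2 y2).re) := Finset.mul_sum _ _ _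
      linarith [key, h2s]
    rw [goal]
    simp [Matrix.sum_apply, kroneckerMap_apply, Matrix.map_apply]
  · rintro ⟨k, A, B, hA, hB, rfl⟩
    have hAsymm : ∀ j (a b : Fin n), A j a b = A j b a := by
      intro j a b
      have h := congrFun (congrFun (hA j).1 a) b
      simpa [conjTranspose_apply] using h.symm
    refine ⟨⟨?_, ?_⟩, ?_⟩
    · exact Finset.sum_induction _ _ (fun a b ha hb => ha.add hb) (PosSemidef.zero)
        (fun j _ => psd_kron _ _ (hA j) (hB j))
    · refine ⟨k, fun j => (A j).map Complex.ofReal, fun j => (B j).map Complex.ofReal,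
        fun j => psd_map_ofReal _ (hA j), fun j => psd_map_ofReal _ (hB j), ?_⟩
      ext ⟨x1, x2⟩ ⟨y1, y2⟩
      simp [Matrix.map_apply, Matrix.sum_apply, kroneckerMap_apply, Complex.ofReal_sum]
    · ext ⟨x1, x2⟩ ⟨y1, y2⟩
      simp only [ptransposeFst, Matrix.of_apply, Matrix.sum_apply, kroneckerMap_apply]
      exact Finset.sum_congr rfl fun j _ => by rw [hAsymm j y1 x1]
end
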